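/- Let G be a real m×n matrix and Z a real m×k matrix with GᵀZ = 0, and let D be the m×m diagonal matrix with diagonal entries d₁,…,d_m satisfying 0 < κmin ≤ dᵢ ≤ κmax for all i; set η = κmax/κmin. Let A = blockdiag(GᵀDG, ZᵀDZ) and M = HᵀDH with H = [G Z]. If x ∈ ℝⁿ⁺ᵏ is nonzero with xᵀMx > 0 and λ ∈ ℝ satisfies Ax = λ·Mx, then 1/(2 − 1/η) ≤ λ ≤ η. -/

import Mathlib

/-!
Write `x = (x₁, x₂)`, `u = G x₁`, `v = Z x₂`, so that `xᵀAx = uᵀDu + vᵀDv` and `xᵀMx = (u+v)ᵀD(u+v)`;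
the two differ by the cross term `2 uᵀDv`. Since `uᵀv = 0`, the cross term equals `2 uᵀ(D - κmin)v`,
and `0 ≤ D - κmin ≤ (1 - 1/η) D` bounds it by `(1 - 1/η)(uᵀDu + vᵀDv)`. This gives
`(1/η) xᵀAx ≤ xᵀMx ≤ (2 - 1/η) xᵀAx`, and a generalized eigenvalue `λ = xᵀAx / xᵀMx` then lies in
`[1/(2 - 1/η), η]`.
-/

open Matrix

section WeightedForm

variable {ι : Type*} [Fintype ι] [DecidableEq ι] {d : ι → ℝ} {κmin κmax : ℝ}

lemma abs_dotProduct_diagonal_mulVec_le_of_orthogonal (hκmin : 0 < κmin)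
    (hd : ∀ i, κmin ≤ d i ∧ d i ≤ κmax) {u v : ι → ℝ} (huv : u ⬝ᵥ v = 0) :
    |u ⬝ᵥ (diagonal d *ᵥ v)| ≤
      (1 - κmin / κmax) / 2 * (u ⬝ᵥ (diagonal d *ᵥ u) + v ⬝ᵥ (diagonal d *ᵥ v)) := by
  have hshift : u ⬝ᵥ (diagonal d *ᵥ v) = ∑ i, (d i - κmin) * (u i * v i) := by
    rw [← sub_zero (u ⬝ᵥ _), ← mul_zero κmin, ← huv]
    simp only [dotProduct, mulVec_diagonal, Finset.mul_sum, ← Finset.sum_sub_distrib]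
    exact Finset.sum_congr rfl fun i _ => by ring
  have hsum : u ⬝ᵥ (diagonal d *ᵥ u) + v ⬝ᵥ (diagonal d *ᵥ v) = ∑ i, d i * (u i ^ 2 + v i ^ 2) := by
    simp only [dotProduct, mulVec_diagonal, ← Finset.sum_add_distrib]
    exact Finset.sum_congr rfl fun i _ => by ring
  rw [hshift, hsum, Finset.mul_sum]
  refine (Finset.abs_sum_le_sum_abs _ _).trans (Finset.sum_le_sum fun i _ => ?_)
  obtain ⟨hlo, hhi⟩ := hd i
  have hκmax : 0 < κmax := hκmin.trans_le (hlo.trans hhi)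
  have hweight : d i - κmin ≤ (1 - κmin / κmax) * d i := by
    have : κmin / κmax * d i ≤ κmin := by
      rw [div_mul_eq_mul_div, div_le_iff₀ hκmax]
      exact mul_le_mul_of_nonneg_left hhi hκmin.le
    linarith
  have hamgm : |u i * v i| ≤ (u i ^ 2 + v i ^ 2) / 2 := by
    rw [abs_le]
    constructor <;> nlinarith [sq_nonneg (u i + v i), sq_nonneg (u i - v i)]
  calc |(d i - κmin) * (u i * v i)| = (d i - κmin) * |u i * v i| := by
        rw [abs_mul, abs_of_nonneg (sub_nonneg.mpr hlo)]
    _ ≤ (d i - κmin) * ((u i ^ 2 + v i ^ 2) / 2) :=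
        mul_le_mul_of_nonneg_left hamgm (sub_nonneg.mpr hlo)
    _ ≤ (1 - κmin / κmax) * d i * ((u i ^ 2 + v i ^ 2) / 2) :=
        mul_le_mul_of_nonneg_right hweight (by positivity)
    _ = (1 - κmin / κmax) / 2 * (d i * (u i ^ 2 + v i ^ 2)) := by ring

lemma add_dotProduct_diagonal_mulVec_add (u v : ι → ℝ) :
    (u + v) ⬝ᵥ (diagonal d *ᵥ (u + v)) =
      u ⬝ᵥ (diagonal d *ᵥ u) + v ⬝ᵥ (diagonal d *ᵥ v) + 2 * u ⬝ᵥ (diagonal d *ᵥ v) := by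
  simp only [dotProduct, mulVec_diagonal, Pi.add_apply, Finset.mul_sum, ← Finset.sum_add_distrib]
  exact Finset.sum_congr rfl fun i _ => by ring

theorem dotProduct_diagonal_mulVec_add_bounds (hκmin : 0 < κmin)
    (hd : ∀ i, κmin ≤ d i ∧ d i ≤ κmax) {u v : ι → ℝ} (huv : u ⬝ᵥ v = 0) :
    κmin / κmax * (u ⬝ᵥ (diagonal d *ᵥ u) + v ⬝ᵥ (diagonal d *ᵥ v)) ≤
        (u + v) ⬝ᵥ (diagonal d *ᵥ (u + v)) ∧
      (u + v) ⬝ᵥ (diagonal d *ᵥ (u + v)) ≤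
        (2 - κmin / κmax) * (u ⬝ᵥ (diagonal d *ᵥ u) + v ⬝ᵥ (diagonal d *ᵥ v)) := by
  have hcross := abs_le.mp (abs_dotProduct_diagonal_mulVec_le_of_orthogonal hκmin hd huv)
  rw [add_dotProduct_diagonal_mulVec_add]
  constructor <;> linarith [hcross.1, hcross.2]

end WeightedForm

section BlockForms

variable {R : Type*} [CommRing R] {l m n : Type*} [Fintype l] [Fintype m] [Fintype n]

lemma dotProduct_transpose_mul_mul_mulVec (B : Matrix m n R) (C : Matrix m m R) (y : n → R) :
    y ⬝ᵥ ((Bᵀ * C * B) *ᵥ y) = (B *ᵥ y) ⬝ᵥ (C *ᵥ (B *ᵥ y)) := by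
  rw [← mulVec_mulVec, ← mulVec_mulVec, dotProduct_mulVec, vecMul_transpose]

lemma dotProduct_fromBlocks_zero_zero_mulVec (P : Matrix l l R) (Q : Matrix m m R)
    (x : l ⊕ m → R) :
    x ⬝ᵥ (fromBlocks P 0 0 Q *ᵥ x) =
      (x ∘ Sum.inl) ⬝ᵥ (P *ᵥ (x ∘ Sum.inl)) + (x ∘ Sum.inr) ⬝ᵥ (Q *ᵥ (x ∘ Sum.inr)) := by
  conv_lhs => rw [← Sum.elim_comp_inl_inr x]
  rw [fromBlocks_mulVec, sumElim_dotProduct_sumElim]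
  simp only [zero_mulVec, add_zero, zero_add, Sum.elim_comp_inl, Sum.elim_comp_inr]

lemma mulVec_orthogonal_of_transpose_mul_eq_zero {G : Matrix m l R} {Z : Matrix m n R}
    (hGZ : Gᵀ * Z = 0) (y : l → R) (z : n → R) : (G *ᵥ y) ⬝ᵥ (Z *ᵥ z) = 0 := by
  rw [dotProduct_mulVec, ← vecMul_transpose, vecMul_vecMul, hGZ, vecMul_zero, zero_dotProduct]

end BlockForms

theorem spectral_equivalence {m n k : Type*} [Fintype m] [DecidableEq m] [Fintype n] [Fintype k]
    {G : Matrix m n ℝ} {Z : Matrix m k ℝ} (hGZ : Gᵀ * Z = 0) {d : m → ℝ} {κmin κmax : ℝ}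
    (hκmin : 0 < κmin) (hd : ∀ i, κmin ≤ d i ∧ d i ≤ κmax) (x : n ⊕ k → ℝ) :
    let A := fromBlocks (Gᵀ * diagonal d * G) 0 0 (Zᵀ * diagonal d * Z)
    let M := (fromCols G Z)ᵀ * diagonal d * fromCols G Z
    κmin / κmax * (x ⬝ᵥ (A *ᵥ x)) ≤ x ⬝ᵥ (M *ᵥ x) ∧
      x ⬝ᵥ (M *ᵥ x) ≤ (2 - κmin / κmax) * (x ⬝ᵥ (A *ᵥ x)) := by
  intro A M
  simp only [A, M, dotProduct_fromBlocks_zero_zero_mulVec, dotProduct_transpose_mul_mul_mulVec,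
    fromCols_mulVec]
  exact dotProduct_diagonal_mulVec_add_bounds hκmin hd
    (mulVec_orthogonal_of_transpose_mul_eq_zero hGZ _ _)

lemma generalized_eigenvalue_mem_of_quadratic_bounds {ι : Type*} [Fintype ι]
    {A M : Matrix ι ι ℝ} {a b : ℝ} (ha : 0 < a) (hb : 0 < b) {x : ι → ℝ}
    (hlow : a * (x ⬝ᵥ (A *ᵥ x)) ≤ x ⬝ᵥ (M *ᵥ x)) (hup : x ⬝ᵥ (M *ᵥ x) ≤ b * (x ⬝ᵥ (A *ᵥ x)))
    (hxM : 0 < x ⬝ᵥ (M *ᵥ x)) {lam : ℝ} (hlam : A *ᵥ x = lam • (M *ᵥ x)) :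
    1 / b ≤ lam ∧ lam ≤ 1 / a := by
  rw [hlam, dotProduct_smul, smul_eq_mul] at hlow hup
  constructor
  · rw [div_le_iff₀ hb]
    nlinarith
  · rw [le_div_iff₀ ha]
    nlinarith

theorem generalized_eigenvalue_bounds_general {m n k : ℕ}
    (G : Matrix (Fin m) (Fin n) ℝ) (Z : Matrix (Fin m) (Fin k) ℝ)
    (hGZ : Gᵀ * Z = 0)
    (d : Fin m → ℝ) (κmin κmax : ℝ) (hκmin : 0 < κmin)
    (hd : ∀ i, κmin ≤ d i ∧ d i ≤ κmax)
    (A M : Matrix (Fin n ⊕ Fin k) (Fin n ⊕ Fin k) ℝ)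
    (hA : A = Matrix.fromBlocks (Gᵀ * Matrix.diagonal d * G) 0 0
        (Zᵀ * Matrix.diagonal d * Z))
    (hM : M = (Matrix.fromCols G Z)ᵀ * Matrix.diagonal d * Matrix.fromCols G Z)
    (x : Fin n ⊕ Fin k → ℝ) (hxM : 0 < x ⬝ᵥ (M *ᵥ x))
    (lam : ℝ) (hlam : A *ᵥ x = lam • (M *ᵥ x)) :
    1 / (2 - 1 / (κmax / κmin)) ≤ lam ∧ lam ≤ κmax / κmin := by
  subst hA hM
  obtain ⟨hlow, hup⟩ := spectral_equivalence hGZ hκmin hd x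
  obtain ⟨i⟩ : Nonempty (Fin m) := by
    by_contra hm
    rw [not_nonempty_iff] at hm
    rw [dotProduct_transpose_mul_mul_mulVec, dotProduct, Finset.univ_eq_empty,
      Finset.sum_empty] at hxM
    exact hxM.false
  have hle : κmin ≤ κmax := (hd i).1.trans (hd i).2
  have hκmax : 0 < κmax := hκmin.trans_le hle
  have hratio : κmin / κmax ≤ 1 := div_le_one_of_le₀ hle hκmax.le
  simpa only [one_div_div] using
    generalized_eigenvalue_mem_of_quadratic_bounds (by positivity) (by linarith) hlow hup hxM hlam

/-- With `GᵀZ = 0`, `D = diag(d)`, `0 < κmin ≤ dᵢ ≤ κmax`, `η = κmax/κmin`,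
`A = blockdiag(GᵀDG, ZᵀDZ)` and `M = HᵀDH` with `H = [G Z]`: if `x ≠ 0`, `xᵀMx > 0` and
`Ax = λ·Mx`, then `1/(2 - 1/η) ≤ λ ≤ η`. -/
theorem generalized_eigenvalue_bounds {m n k : ℕ}
    (G : Matrix (Fin m) (Fin n) ℝ) (Z : Matrix (Fin m) (Fin k) ℝ)
    (hGZ : Gᵀ * Z = 0)
    (d : Fin m → ℝ) (κmin κmax : ℝ) (hκmin : 0 < κmin)
    (hd : ∀ i, κmin ≤ d i ∧ d i ≤ κmax)
    (A M : Matrix (Fin n ⊕ Fin k) (Fin n ⊕ Fin k) ℝ)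
    (hA : A = Matrix.fromBlocks (Gᵀ * Matrix.diagonal d * G) 0 0
        (Zᵀ * Matrix.diagonal d * Z))
    (hM : M = (Matrix.fromCols G Z)ᵀ * Matrix.diagonal d * Matrix.fromCols G Z)
    (x : Fin n ⊕ Fin k → ℝ) (hx : x ≠ 0) (hxM : 0 < x ⬝ᵥ (M *ᵥ x))
    (lam : ℝ) (hlam : A *ᵥ x = lam • (M *ᵥ x)) :
    1 / (2 - 1 / (κmax / κmin)) ≤ lam ∧ lam ≤ κmax / κmin :=
  generalized_eigenvalue_bounds_general G Z hGZ d κmin κmax hκmin hd A M hA hM x hxM lam hlam
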